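/- For any function F : (ℕ → Bool) → ℕ → Bool, the set of F-autoreducible elements of Cantor space, if measurable, has measure zero; and if it has the Baire property, it is meager. -/

import Mathlib

open MeasureTheory Set Filter

/-- The fair-coin (product Bernoulli(1/2)) measure on Cantor space, realized as the
pushforward of Lebesgue measure on [0,1) under the binary-digit map. -/
noncomputable def coin : Measure (ℕ → Bool) :=
  Measure.map (fun r n => decide (⌊r * 2 ^ (n + 1)⌋ % 2 = 1)) (volume.restrict (Set.Ico (0:ℝ) 1))

/-- Flip the i-th bit of x. -/
def bitFlip (i : ℕ) (x : ℕ → Bool) : ℕ → Bool := Function.update x i (!x i)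

/-- The basic cylinder of sequences extending the finite binary string s. -/
def cyl (s : List Bool) : Set (ℕ → Bool) := {x | ∀ k, k < s.length → x k = s.getD k false}

/-- x with its n-th bit deleted (later bits shifted left). -/
def del (n : ℕ) (x : ℕ → Bool) : ℕ → Bool := fun k => if k < n then x k else x (k + 1)

/-- x and y differ in only finitely many coordinates. -/
def FinDiff (x y : ℕ → Bool) : Prop := {n | x n ≠ y n}.Finite

/-- x is autoreducible via the oracle machine F. -/
def Autoreducible (F : (ℕ → Bool) → ℕ → Bool) (x : ℕ → Bool) : Prop :=
  ∀ n, F (del n x) n = x n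

/-!
Flipping one bit of an `F`-autoreducible sequence destroys autoreducibility at that bit, since
`F` sees the same input `del n x` on both sequences. So it suffices that a set `s` of sequences
with `s ∩ bitFlip n '' s = ∅` for all `n` is small.

Category: `s` agrees with an open set `u` up to a meagre set. If `u` were nonempty it would
contain a cylinder fixing the first `n` bits; `bitFlip n` maps this cylinder onto itself, so both
`s` and its disjoint flip would be comeagre in it, impossible in a Baire space.

Measure: the coin measure is the image of Lebesgue measure on `[0, 1)` under binary expansion,
and flipping a `0` digit `n` to `1` is translation by `2⁻⁽ⁿ⁺¹⁾`. If the preimage of `s` had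
positive measure, a density point would give a dyadic interval of length `2⁻ⁿ` more than half
filled by it; translating the left half onto the right half then forces the set to meet its
translate.
-/

open Topology

lemma bitFlip_apply_self (n : ℕ) (x : ℕ → Bool) : bitFlip n x n = !x n :=
  Function.update_self _ _ _

lemma bitFlip_apply_of_ne {n k : ℕ} (x : ℕ → Bool) (h : k ≠ n) : bitFlip n x k = x k :=
  Function.update_of_ne h _ _

lemma bitFlip_involutive (n : ℕ) : Function.Involutive (bitFlip n) := by
  intro x
  funext k
  rcases eq_or_ne k n with rfl | hk
  · simp [bitFlip_apply_self]
  · simp [bitFlip_apply_of_ne _ hk]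

lemma continuous_bitFlip (n : ℕ) : Continuous (bitFlip n) :=
  continuous_id.update n ((continuous_of_discreteTopology (f := not)).comp (continuous_apply n))

lemma isOpenMap_bitFlip (n : ℕ) : IsOpenMap (bitFlip n) := fun u hu => by
  rw [image_eq_preimage_of_inverse (bitFlip_involutive n) (bitFlip_involutive n)]
  exact hu.preimage (continuous_bitFlip n)

lemma bitFlip_mem_cylinder {n : ℕ} {x y : ℕ → Bool} (hy : y ∈ PiNat.cylinder x n) :
    bitFlip n y ∈ PiNat.cylinder x n := fun k hk => by
  rw [bitFlip_apply_of_ne _ hk.ne]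
  exact hy k hk

lemma del_bitFlip (n : ℕ) (x : ℕ → Bool) : del n (bitFlip n x) = del n x := by
  funext k
  unfold del
  split_ifs <;> exact bitFlip_apply_of_ne _ (by omega)

lemma Autoreducible.not_bitFlip {F : (ℕ → Bool) → ℕ → Bool} {x : ℕ → Bool}
    (hx : Autoreducible F x) (n : ℕ) : ¬ Autoreducible F (bitFlip n x) := fun h => by
  have := h n
  rw [del_bitFlip, hx n, bitFlip_apply_self] at this
  cases x n <;> simp at this

lemma isMeagre_of_bitFlip_notMem {s : Set (ℕ → Bool)} (hs : BaireMeasurableSet s)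
    (h : ∀ n x, x ∈ s → bitFlip n x ∉ s) : IsMeagre s := by
  obtain ⟨u, hu, hsu⟩ := hs.residualEq_isOpen
  have hsu' := eventuallyEq_set.1 hsu
  have hus : IsMeagre (u \ s) := hsu'.mono fun y hy hyus => hyus.2 (hy.2 hyus.1)
  replace hsu : IsMeagre (s \ u) := hsu'.mono fun y hy hysu => hysu.2 (hy.1 hysu.1)
  rcases u.eq_empty_or_nonempty with rfl | ⟨x, hx⟩
  · simpa using hsu
  obtain ⟨n, hn⟩ : ∃ n, PiNat.cylinder x n ⊆ u := by
    obtain ⟨_, ⟨y, n, rfl⟩, hxy, hyu⟩ :=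
      (PiNat.isTopologicalBasis_cylinders _).exists_subset_of_mem_open hx hu
    exact ⟨n, (PiNat.mem_cylinder_iff_eq.1 hxy).symm ▸ hyu⟩
  set C := PiNat.cylinder x n
  have hC : IsMeagre (C \ s) := hus.mono (sdiff_subset_sdiff_left hn)
  have hCcover : C ⊆ (C \ s) ∪ bitFlip n ⁻¹' (C \ s) := fun y hy => by
    by_cases hys : y ∈ s
    · exact Or.inr ⟨bitFlip_mem_cylinder hy, h n y hys⟩
    · exact Or.inl ⟨hy, hys⟩
  exact absurd ((hC.union (hC.preimage_of_isOpenMap (continuous_bitFlip n)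
    (isOpenMap_bitFlip n))).mono hCcover)
    (not_isMeagre_of_isOpen (PiNat.isOpen_cylinder _ x n) ⟨x, PiNat.self_mem_cylinder x n⟩)

noncomputable def binaryDigits (r : ℝ) (n : ℕ) : Bool := decide (⌊r * 2 ^ (n + 1)⌋ % 2 = 1)

lemma measurable_binaryDigits : Measurable binaryDigits :=
  measurable_pi_lambda _ fun _ =>
    (measurable_from_top (f := fun z : ℤ => decide (z % 2 = 1))).comp
      (Int.measurable_floor.comp (measurable_id.mul_const _))

lemma floor_mul_two_pow_of_le (r : ℝ) {m n : ℕ} (h : m ≤ n) :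
    ⌊r * 2 ^ (m + 1)⌋ = ⌊r * 2 ^ (n + 1)⌋ / 2 ^ (n - m) := by
  have : r * 2 ^ (m + 1) = r * 2 ^ (n + 1) / ((2 ^ (n - m) : ℕ) : ℝ) := by
    rw [eq_div_iff (by positivity), Nat.cast_pow, Nat.cast_ofNat, mul_assoc, ← pow_add]
    congr 2
    omega
  rw [this, Int.floor_div_natCast]
  norm_cast

-- `Even ⌊r * 2 ^ (n + 1)⌋` says that digit `n` of `r` is `0`, so adding `2⁻⁽ⁿ⁺¹⁾` makes no carry.
lemma binaryDigits_add_of_even {r : ℝ} {n : ℕ} (h : Even ⌊r * 2 ^ (n + 1)⌋) :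
    binaryDigits (r + (2 ^ (n + 1))⁻¹) = bitFlip n (binaryDigits r) := by
  obtain ⟨j, hj⟩ := h
  have hn : ⌊(r + (2 ^ (n + 1))⁻¹) * 2 ^ (n + 1)⌋ = j + j + 1 := by
    rw [add_mul, inv_mul_cancel₀ (by positivity), Int.floor_add_one, hj]
  funext m
  rcases lt_trichotomy m n with hmn | rfl | hnm
  · rw [bitFlip_apply_of_ne _ hmn.ne, binaryDigits, binaryDigits,
      floor_mul_two_pow_of_le _ hmn.le, floor_mul_two_pow_of_le _ hmn.le, hn, hj,
      ← mul_pow_sub_one (by omega : n - m ≠ 0), ← Int.ediv_ediv_of_nonneg (by norm_num),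
      ← Int.ediv_ediv_of_nonneg (by norm_num)]
    congr 4
    omega
  · rw [bitFlip_apply_self, binaryDigits, binaryDigits, hn, hj]
    grind
  · rw [bitFlip_apply_of_ne _ hnm.ne', binaryDigits, binaryDigits]
    have : (r + (2 ^ (n + 1))⁻¹) * 2 ^ (m + 1) = r * 2 ^ (m + 1) + ((2 ^ (m - n) : ℤ) : ℝ) := by
      rw [add_mul, Int.cast_pow, Int.cast_ofNat, inv_mul_eq_div]
      congr 1
      rw [div_eq_iff (by positivity), ← pow_add]
      congr 1
      omega
    rw [this, Int.floor_add_intCast, ← mul_pow_sub_one (by omega : m - n ≠ 0)]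
    simp only [decide_eq_decide]
    omega

lemma Ico_floor_mul_two_pow_subset_closedBall (x : ℝ) (n : ℕ) :
    Ico (⌊x * 2 ^ n⌋ / 2 ^ n : ℝ) (⌊x * 2 ^ n⌋ / 2 ^ n + (2 ^ n)⁻¹) ⊆
      Metric.closedBall x (2 ^ n)⁻¹ := by
  rintro y ⟨hy1, hy2⟩
  have hpos : (0 : ℝ) < 2 ^ n := by positivity
  have hx1 := Int.floor_le (x * 2 ^ n)
  have hx2 := Int.lt_floor_add_one (x * 2 ^ n)
  rw [div_le_iff₀ hpos] at hy1
  rw [← one_div, ← add_div, lt_div_iff₀ hpos] at hy2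
  rw [Metric.mem_closedBall, Real.dist_eq, ← one_div, le_div_iff₀ hpos, ← abs_of_pos hpos,
    ← abs_mul, abs_le]
  constructor <;> linarith [sub_mul y x (2 ^ n)]

lemma exists_dyadic_Ico_two_mul_measureReal_sdiff_lt {s : Set ℝ} (hs : MeasurableSet s)
    (h0 : volume s ≠ 0) :
    ∃ (n : ℕ) (k : ℤ),
      2 * volume.real (Ico (k / 2 ^ n : ℝ) (k / 2 ^ n + (2 ^ n)⁻¹) \ s) < (2 ^ n)⁻¹ := by
  have : (ae (volume.restrict s)).NeBot := ae_neBot.2 (by rwa [Ne, Measure.restrict_eq_zero])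
  obtain ⟨x, hx⟩ := (Besicovitch.ae_tendsto_measure_inter_div volume s).exists
  have hx' : Tendsto (fun r => volume.real (s ∩ Metric.closedBall x r) /
      volume.real (Metric.closedBall x r)) (𝓝[>] 0) (𝓝 1) := by
    have := (ENNReal.tendsto_toReal ENNReal.one_ne_top).comp hx
    simp only [Function.comp_def, ENNReal.toReal_div, ENNReal.toReal_one] at this
    exact this
  have hpow : Tendsto (fun n : ℕ => ((2 : ℝ) ^ n)⁻¹) atTop (𝓝[>] 0) :=
    tendsto_inv_atTop_nhdsGT_zero.comp (tendsto_pow_atTop_atTop_of_one_lt one_lt_two)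
  obtain ⟨n, hn⟩ :=
    ((hx'.comp hpow).eventually (lt_mem_nhds (show (3 / 4 : ℝ) < 1 by norm_num))).exists
  set t : ℝ := ((2 : ℝ) ^ n)⁻¹
  set B := Metric.closedBall x t
  have ht : 0 < t := by positivity
  have hBfin : volume B ≠ ⊤ := measure_closedBall_lt_top.ne
  have hB : volume.real (B \ s) + volume.real (B ∩ s) = 2 * t := by
    rw [measureReal_sdiff_add_inter hs hBfin, Real.volume_real_closedBall ht.le]
  have hsB : 3 / 4 * (2 * t) < volume.real (B ∩ s) := by
    rw [Function.comp_apply, Real.volume_real_closedBall ht.le, lt_div_iff₀ (by positivity),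
      inter_comm] at hn
    exact hn
  have hI : _ \ s ⊆ B \ s :=
    sdiff_subset_sdiff_left (Ico_floor_mul_two_pow_subset_closedBall x n)
  refine ⟨n, ⌊x * 2 ^ n⌋, ?_⟩
  linarith [measureReal_mono hI (measure_ne_top_of_subset sdiff_subset hBfin)]

lemma floor_mul_two_pow_succ_of_mem_Ico {n : ℕ} {k : ℤ} {r : ℝ}
    (h : r ∈ Ico (k / 2 ^ n : ℝ) (k / 2 ^ n + (2 ^ (n + 1))⁻¹)) : ⌊r * 2 ^ (n + 1)⌋ = 2 * k := by
  have hpos : (0 : ℝ) < 2 ^ n := by positivity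
  have hδ : (2 ^ (n + 1) : ℝ)⁻¹ = 2⁻¹ / 2 ^ n := by
    rw [pow_succ, mul_inv, div_eq_mul_inv, mul_comm]
  obtain ⟨h1, h2⟩ := h
  rw [div_le_iff₀ hpos] at h1
  rw [hδ, ← add_div, lt_div_iff₀ hpos] at h2
  rw [Int.floor_eq_iff, pow_succ]
  push_cast
  constructor <;> linarith

lemma volume_eq_zero_of_add_two_pow_notMem {s : Set ℝ} (hs : MeasurableSet s)
    (h : ∀ (n : ℕ) (r : ℝ), Even ⌊r * 2 ^ (n + 1)⌋ → r ∈ s → r + (2 ^ (n + 1))⁻¹ ∉ s) :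
    volume s = 0 := by
  by_contra h0
  obtain ⟨n, k, hnk⟩ := exists_dyadic_Ico_two_mul_measureReal_sdiff_lt hs h0
  set δ : ℝ := (2 ^ (n + 1))⁻¹
  set c : ℝ := k / 2 ^ n
  have hδ : 0 < δ := by positivity
  have htwo : ((2 : ℝ) ^ n)⁻¹ = δ + δ := by
    simp only [δ]
    ring
  set L := Ico c (c + δ)
  set R := Ico (c + δ) (c + δ + δ)
  have hfin : ∀ t ⊆ Ico c (c + δ + δ), volume t ≠ ⊤ := fun t ht =>
    measure_ne_top_of_subset ht measure_Ico_lt_top.ne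
  have hL : L \ s ⊆ Ico c (c + δ + δ) := sdiff_subset.trans (Ico_subset_Ico_right (by linarith))
  have hR : R \ s ⊆ Ico c (c + δ + δ) := sdiff_subset.trans (Ico_subset_Ico_left (by linarith))
  have hshift : L ∩ s ⊆ (· + δ) ⁻¹' (R \ s) := fun r ⟨hrL, hrs⟩ =>
    ⟨⟨by linarith [hrL.1], by linarith [hrL.2]⟩,
      h n r ⟨k, by rw [floor_mul_two_pow_succ_of_mem_Ico hrL]; ring⟩ hrs⟩
  have hsplit : Ico c (c + δ + δ) \ s = L \ s ∪ R \ s := by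
    rw [← Ico_union_Ico_eq_Ico (b := c + δ) (by linarith) (by linarith), union_sdiff_distrib]
  have : δ ≤ volume.real (Ico c (c + δ + δ) \ s) := calc
    δ = volume.real L := by simp [L, hδ.le]
    _ = volume.real (L ∩ s) + volume.real (L \ s) :=
      (measureReal_inter_add_sdiff hs measure_Ico_lt_top.ne).symm
    _ ≤ volume.real ((· + δ) ⁻¹' (R \ s)) + volume.real (L \ s) := by
      gcongr
      rw [measure_preimage_add_right]
      exact hfin _ hR
    _ = volume.real (R \ s) + volume.real (L \ s) := by
      rw [measureReal_def, measure_preimage_add_right, ← measureReal_def]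
    _ = volume.real (Ico c (c + δ + δ) \ s) := by
      rw [hsplit, measureReal_union _ _ (hfin _ hL) (hfin _ hR), add_comm]
      · exact Ico_disjoint_Ico_same.mono sdiff_subset sdiff_subset
      · exact measurableSet_Ico.diff hs
  rw [htwo, ← add_assoc] at hnk
  linarith

lemma coin_eq_map_binaryDigits : coin = (volume.restrict (Ico 0 1)).map binaryDigits := rfl

lemma coin_eq_zero_of_bitFlip_notMem {s : Set (ℕ → Bool)} (hs : MeasurableSet s)
    (h : ∀ n x, x ∈ s → bitFlip n x ∉ s) : coin s = 0 := by
  rw [coin_eq_map_binaryDigits, Measure.map_apply measurable_binaryDigits hs,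
    Measure.restrict_apply (measurable_binaryDigits hs)]
  refine volume_eq_zero_of_add_two_pow_notMem
    ((measurable_binaryDigits hs).inter measurableSet_Ico) fun n r hr hrs hrs' => h n _ hrs.1 ?_
  rw [← binaryDigits_add_of_even hr]
  exact hrs'.1

theorem autoreducibles_null_and_meagre (F : (ℕ → Bool) → ℕ → Bool) :
    (MeasurableSet {x | Autoreducible F x} → coin {x | Autoreducible F x} = 0) ∧
    (BaireMeasurableSet {x | Autoreducible F x} → IsMeagre {x | Autoreducible F x}) := by
  have hflip : ∀ n x, x ∈ {x | Autoreducible F x} → bitFlip n x ∉ {x | Autoreducible F x} :=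
    fun n _ hx => hx.not_bitFlip n
  exact ⟨fun hA => coin_eq_zero_of_bitFlip_notMem hA hflip,
    fun hB => isMeagre_of_bitFlip_notMem hB hflip⟩
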